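/- (Chi-square lower bound on mutual information, Theorem 3 of the paper.) Let (X, Y) be random variables with joint law P_{XY} on 𝒳 × 𝒴, marginals P_X and P_Y, and let Q_{X'}, Q_{Y'} be probability measures on 𝒳, 𝒴 such that: P_{XY} is absolutely continuous with respect to Q_{X'} ⊗ Q_{Y'}; P_X and Q_{X'} are mutually absolutely continuous with finite χ²(P_X‖Q_{X'}) and χ²(Q_{X'}‖P_X); P_Y and Q_{Y'} are mutually absolutely continuous with finite χ²(P_Y‖Q_{Y'}) and χ²(Q_{Y'}‖P_Y); and all KL divergences involved are finite. Then for every bounded measurable function T : 𝒳 × 𝒴 → ℝ and every real α > 0: I(X; Y) ≥ E_{P_{XY}}[T(X, Y)] − E_{Q_{X'} ⊗ Q_{Y'}}[exp(T(X', Y'))]/α − log α + 1 − χ²_UP(P_X‖Q_{X'}) − χ²_UP(P_Y‖Q_{Y'}). -/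

import Mathlib

/-!
The log-likelihood ratio of `P_{XY}` against `Q_{X'} ⊗ Q_{Y'}` splits almost surely into the one
against `P_X ⊗ P_Y` plus the two marginal ones, so
`D(P_{XY} ‖ Q_{X'} ⊗ Q_{Y'}) = I(X;Y) + D(P_X‖Q_{X'}) + D(P_Y‖Q_{Y'})`. The Donsker–Varadhan
inequality bounds the left side below by `E_P[T] - log E_Q[exp T]`, and
`log t ≤ t / α + log α - 1`. Each marginal divergence is at most `χ²_UP` by the elementary
inequality `log v ≥ (1 - 3l + 3l²)(1 - 1/v) + 3l(v - 1) - (3/2) l² (v² - 1)` (all `v > 0`, `l ∈ ℝ`):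
at `v = (1 + χ²(P‖Q)) dQ/dP` its right side has `P`-mean `3l χ²(P‖Q) - (3/2) l² d` with
`d = (1 + χ²(Q‖P))(1 + χ²(P‖Q))² - 1`, and the best `l = χ²(P‖Q) / d` gives `χ²_UP`.
-/

open MeasureTheory Real

/-- The Kullback–Leibler divergence `D(P‖Q) = ∫ log (dP/dQ) dP`. -/
noncomputable def klDiv {X : Type*} [MeasurableSpace X] (P Q : Measure X) : ℝ :=
  ∫ x, llr P Q x ∂P

/-- The chi-square divergence `χ²(P‖Q) = ∫ (dP/dQ)² dQ − 1`. -/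
noncomputable def chiSqDiv {X : Type*} [MeasurableSpace X] (P Q : Measure X) : ℝ :=
  (∫ x, ((P.rnDeriv Q x).toReal) ^ 2 ∂Q) - 1

/-- The refined chi-square upper bound `χ²_UP(P‖Q)`, which satisfies `D(P‖Q) ≤ χ²_UP(P‖Q)`. -/
noncomputable def chiSqUP {X : Type*} [MeasurableSpace X] (P Q : Measure X) : ℝ :=
  Real.log (1 + chiSqDiv P Q) -
    (3 / 2) * (chiSqDiv P Q) ^ 2 /
      ((1 + chiSqDiv Q P) * (1 + chiSqDiv P Q) ^ 2 - 1)

/-- The mutual information `I(X;Y) = D(P_{XY} ‖ P_X ⊗ P_Y)` of a joint law `μ` on a product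
space, where `μ.fst` and `μ.snd` are the marginals. -/
noncomputable def mutualInfo {𝓧 𝓨 : Type*} [MeasurableSpace 𝓧] [MeasurableSpace 𝓨]
    (μ : Measure (𝓧 × 𝓨)) : ℝ :=
  klDiv μ (μ.fst.prod μ.snd)

open Set

lemma le_of_hasDerivAt_of_sub_one_mul_nonneg {f f' : ℝ → ℝ}
    (hf : ∀ x ∈ Ioi (0 : ℝ), HasDerivAt f (f' x) x)
    (hf' : ∀ x ∈ Ioi (0 : ℝ), 0 ≤ (x - 1) * f' x) {v : ℝ} (hv : 0 < v) : f 1 ≤ f v := by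
  have hcont {a b : ℝ} (ha : 0 < a) : ContinuousOn f (Icc a b) := fun x hx =>
    (hf x (ha.trans_le hx.1)).continuousAt.continuousWithinAt
  have hderiv {a b : ℝ} (ha : 0 < a) :
      ∀ x ∈ interior (Icc a b), HasDerivWithinAt f (f' x) (interior (Icc a b)) x := by
    intro x hx
    rw [interior_Icc] at hx ⊢
    exact (hf x (ha.trans hx.1)).hasDerivWithinAt
  rcases le_total 1 v with h1 | h1
  · refine monotoneOn_of_hasDerivWithinAt_nonneg (convex_Icc 1 v) (hcont one_pos)
      (hderiv one_pos) (fun x hx => ?_) ⟨le_rfl, h1⟩ ⟨h1, le_rfl⟩ h1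
    rw [interior_Icc] at hx
    exact (mul_nonneg_iff_of_pos_left (sub_pos.2 hx.1)).1 (hf' x (one_pos.trans hx.1))
  · refine antitoneOn_of_hasDerivWithinAt_nonpos (convex_Icc v 1) (hcont hv)
      (hderiv hv) (fun x hx => ?_) ⟨le_rfl, h1⟩ ⟨h1, le_rfl⟩ h1
    rw [interior_Icc] at hx
    exact nonpos_of_mul_nonneg_right (hf' x (hv.trans hx.1)) (sub_neg.2 hx.2)

lemma sub_one_mul_add_one_mul_log_sub_nonneg {v : ℝ} (hv : 0 < v) :
    0 ≤ (v - 1) * ((v + 1) * log v - 2 * (v - 1)) := by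
  have hderiv : ∀ x ∈ Ioi (0 : ℝ),
      HasDerivAt (fun x => (x + 1) * log x - 2 * (x - 1)) (log x + x⁻¹ - 1) x := by
    intro x (hx : 0 < x)
    have h : HasDerivAt (fun x => (x + 1) * log x - 2 * (x - 1))
        (1 * log x + (x + 1) * x⁻¹ - 2 * 1) x :=
      (((hasDerivAt_id' x).add_const 1).mul (hasDerivAt_log hx.ne')).sub
        (((hasDerivAt_id' x).sub_const 1).const_mul 2)
    exact h.congr_deriv (by field_simp; ring)
  have hmono : MonotoneOn (fun x => (x + 1) * log x - 2 * (x - 1)) (Ioi 0) :=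
    monotoneOn_of_hasDerivWithinAt_nonneg (convex_Ioi 0)
      (fun x hx => (hderiv x hx).continuousAt.continuousWithinAt)
      (fun x hx => (hderiv x (interior_subset hx)).hasDerivWithinAt)
      (fun x hx => by linarith [one_sub_inv_le_log_of_pos (interior_subset hx : 0 < x)])
  rcases le_total 1 v with h1 | h1
  · have := hmono (mem_Ioi.2 one_pos) (mem_Ioi.2 hv) h1
    simp only [log_one] at this
    nlinarith
  · have := hmono (mem_Ioi.2 hv) (mem_Ioi.2 one_pos) h1
    simp only [log_one] at this
    nlinarith

lemma five_mul_sq_sub_four_mul_sub_one_le_mul_log {v : ℝ} (hv : 0 < v) :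
    5 * v ^ 2 - 4 * v - 1 ≤ 2 * (v ^ 2 + 2 * v) * log v := by
  have hderiv : ∀ x ∈ Ioi (0 : ℝ), HasDerivAt
      (fun x => 2 * (x ^ 2 + 2 * x) * log x - (5 * x ^ 2 - 4 * x - 1))
      (4 * ((x + 1) * log x - 2 * (x - 1))) x := by
    intro x (hx : 0 < x)
    have hsq : HasDerivAt (fun x : ℝ => x ^ 2) (2 * x) x := by
      simpa using hasDerivAt_pow 2 x
    have h : HasDerivAt (fun x => 2 * (x ^ 2 + 2 * x) * log x - (5 * x ^ 2 - 4 * x - 1))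
        (2 * (2 * x + 2 * 1) * log x + 2 * (x ^ 2 + 2 * x) * x⁻¹ - (5 * (2 * x) - 4 * 1)) x :=
      (((hsq.add ((hasDerivAt_id' x).const_mul 2)).const_mul 2).mul
        (hasDerivAt_log hx.ne')).sub (((hsq.const_mul 5).sub
          ((hasDerivAt_id' x).const_mul 4)).sub_const 1)
    exact h.congr_deriv (by field_simp; ring)
  have := le_of_hasDerivAt_of_sub_one_mul_nonneg hderiv
    (fun x hx => by nlinarith [sub_one_mul_add_one_mul_log_sub_nonneg (mem_Ioi.1 hx)]) hv
  norm_num at this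
  linarith

lemma chiSq_certificate_le_log {v : ℝ} (hv : 0 < v) (l : ℝ) :
    (1 - 3 * l + 3 * l ^ 2) * (1 - v⁻¹) + 3 * l * (v - 1) - 3 / 2 * l ^ 2 * (v ^ 2 - 1)
      ≤ log v := by
  have hH := five_mul_sq_sub_four_mul_sub_one_le_mul_log hv
  have hpos : 0 < 2 * v * (v + 2) := by positivity
  rw [← mul_le_mul_iff_of_pos_right hpos]
  have hsq : 0 ≤ 3 * (v - 1) ^ 2 * ((v + 2) * l - 1) ^ 2 := by positivity
  have key : log v * (2 * v * (v + 2)) - ((1 - 3 * l + 3 * l ^ 2) * (1 - v⁻¹) + 3 * l * (v - 1)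
      - 3 / 2 * l ^ 2 * (v ^ 2 - 1)) * (2 * v * (v + 2)) = (2 * (v ^ 2 + 2 * v) * log v
      - (5 * v ^ 2 - 4 * v - 1)) + 3 * (v - 1) ^ 2 * ((v + 2) * l - 1) ^ 2 := by
    field_simp
    ring
  linarith

section ChiSquare

variable {X : Type*} [MeasurableSpace X] {P Q : Measure X}

lemma integrable_toReal_rnDeriv_iff_integrable_sq [SigmaFinite P] [SigmaFinite Q]
    (hPQ : P ≪ Q) :
    Integrable (fun x => (P.rnDeriv Q x).toReal) P ↔
      Integrable (fun x => (P.rnDeriv Q x).toReal ^ 2) Q := by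
  simp_rw [← integrable_rnDeriv_smul_iff hPQ, smul_eq_mul, sq]

lemma integral_toReal_rnDeriv_eq_integral_sq [SigmaFinite P] [SigmaFinite Q] (hPQ : P ≪ Q) :
    ∫ x, (P.rnDeriv Q x).toReal ∂P = ∫ x, (P.rnDeriv Q x).toReal ^ 2 ∂Q := by
  simp_rw [← integral_rnDeriv_smul hPQ, smul_eq_mul, sq]

lemma chiSqDiv_nonneg [IsProbabilityMeasure P] [IsProbabilityMeasure Q] (hPQ : P ≪ Q)
    (h : Integrable (fun x => (P.rnDeriv Q x).toReal ^ 2) Q) : 0 ≤ chiSqDiv P Q := by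
  have hL2 : MemLp (fun x => (P.rnDeriv Q x).toReal) 2 Q :=
    (memLp_two_iff_integrable_sq
      (Measure.measurable_rnDeriv P Q).ennreal_toReal.aestronglyMeasurable).2 h
  have := ProbabilityTheory.variance_nonneg (fun x => (P.rnDeriv Q x).toReal) Q
  rw [ProbabilityTheory.variance_eq_sub hL2, Measure.integral_toReal_rnDeriv hPQ] at this
  simpa [chiSqDiv] using this

lemma ae_toReal_rnDeriv_pos [SigmaFinite P] [SigmaFinite Q] (hPQ : P ≪ Q) :
    ∀ᵐ x ∂P, 0 < (P.rnDeriv Q x).toReal := by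
  filter_upwards [Measure.rnDeriv_pos hPQ, hPQ.ae_le (Measure.rnDeriv_lt_top P Q)]
    with x h0 htop
  exact ENNReal.toReal_pos h0.ne' htop.ne

lemma ae_toReal_rnDeriv_eq_inv [SigmaFinite P] [SigmaFinite Q] (hPQ : P ≪ Q) :
    ∀ᵐ x ∂P, (Q.rnDeriv P x).toReal = (P.rnDeriv Q x).toReal⁻¹ := by
  filter_upwards [Measure.inv_rnDeriv hPQ] with x hx
  rw [← hx, Pi.inv_apply, ENNReal.toReal_inv]

lemma integrable_llr_of_integrable_rnDeriv_sq [IsFiniteMeasure P] [IsFiniteMeasure Q]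
    (hPQ : P ≪ Q) (h : Integrable (fun x => (P.rnDeriv Q x).toReal ^ 2) Q) :
    Integrable (llr P Q) P := by
  refine integrable_of_le_of_le (stronglyMeasurable_llr P Q).aestronglyMeasurable
    (g₁ := fun x => 1 - (Q.rnDeriv P x).toReal) (g₂ := fun x => (P.rnDeriv Q x).toReal - 1)
    ?_ ?_ ((integrable_const 1).sub Measure.integrable_toReal_rnDeriv)
    (((integrable_toReal_rnDeriv_iff_integrable_sq hPQ).2 h).sub (integrable_const 1))
  · filter_upwards [ae_toReal_rnDeriv_pos hPQ, ae_toReal_rnDeriv_eq_inv hPQ] with x hpos hinv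
    rw [hinv]
    exact one_sub_inv_le_log_of_pos hpos
  · filter_upwards [ae_toReal_rnDeriv_pos hPQ] with x hpos
    exact log_le_sub_one_of_pos hpos

lemma ae_llr_le_log_sub_certificate [SigmaFinite P] [SigmaFinite Q] (hPQ : P ≪ Q) {m : ℝ}
    (hm : 0 < m) (l : ℝ) :
    ∀ᵐ x ∂P, llr P Q x ≤ log m - ((1 - 3 * l + 3 * l ^ 2) * (1 - (P.rnDeriv Q x).toReal / m)
      + 3 * l * (m * (Q.rnDeriv P x).toReal - 1)
      - 3 / 2 * l ^ 2 * ((m * (Q.rnDeriv P x).toReal) ^ 2 - 1)) := by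
  filter_upwards [ae_toReal_rnDeriv_pos hPQ, ae_toReal_rnDeriv_eq_inv hPQ] with x hf hw
  have hcert := chiSq_certificate_le_log (mul_pos hm (hw ▸ inv_pos.2 hf)) l
  have hinv : (m * (Q.rnDeriv P x).toReal)⁻¹ = (P.rnDeriv Q x).toReal / m := by
    rw [hw]; field_simp
  rw [hinv, hw, log_mul hm.ne' (inv_pos.2 hf).ne', log_inv, ← hw] at hcert
  rw [llr]
  linarith

variable [IsProbabilityMeasure P] [IsProbabilityMeasure Q]

lemma klDiv_le_log_sub_add (hPQ : P ≪ Q) (hQP : Q ≪ P)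
    (hPQ2 : Integrable (fun x => (P.rnDeriv Q x).toReal ^ 2) Q)
    (hQP2 : Integrable (fun x => (Q.rnDeriv P x).toReal ^ 2) P) (l : ℝ) :
    klDiv P Q ≤ log (1 + chiSqDiv P Q) - 3 * l * chiSqDiv P Q
      + 3 / 2 * l ^ 2 * ((1 + chiSqDiv Q P) * (1 + chiSqDiv P Q) ^ 2 - 1) := by
  set f : X → ℝ := fun x => (P.rnDeriv Q x).toReal
  set w : X → ℝ := fun x => (Q.rnDeriv P x).toReal
  set m := 1 + chiSqDiv P Q
  set A := 1 - 3 * l + 3 * l ^ 2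
  have hm : 0 < m := by linarith [chiSqDiv_nonneg hPQ hPQ2]
  have hfP : Integrable f P := (integrable_toReal_rnDeriv_iff_integrable_sq hPQ).2 hPQ2
  have hwP : Integrable w P := Measure.integrable_toReal_rnDeriv
  have hw2 : Integrable (fun x => (m * w x) ^ 2) P := by
    simp_rw [mul_pow]
    exact hQP2.const_mul (m ^ 2)
  have hA : Integrable (fun x => A * (1 - f x / m)) P :=
    ((integrable_const 1).sub (hfP.div_const m)).const_mul A
  have hB : Integrable (fun x => 3 * l * (m * w x - 1)) P :=
    ((hwP.const_mul m).sub (integrable_const 1)).const_mul _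
  have hC : Integrable (fun x => 3 / 2 * l ^ 2 * ((m * w x) ^ 2 - 1)) P :=
    (hw2.sub (integrable_const 1)).const_mul _
  have hAB : Integrable (fun x => A * (1 - f x / m) + 3 * l * (m * w x - 1)) P := hA.add hB
  have hABC : Integrable (fun x => A * (1 - f x / m) + 3 * l * (m * w x - 1)
      - 3 / 2 * l ^ 2 * ((m * w x) ^ 2 - 1)) P := hAB.sub hC
  have hIA : ∫ x, A * (1 - f x / m) ∂P = 0 := by
    have hf : ∫ x, f x ∂P = m := by
      rw [integral_toReal_rnDeriv_eq_integral_sq hPQ]; simp [m, chiSqDiv]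
    rw [integral_const_mul, integral_sub (integrable_const 1) (hfP.div_const m), integral_div, hf,
      div_self hm.ne']
    simp
  have hIB : ∫ x, 3 * l * (m * w x - 1) ∂P = 3 * l * (m - 1) := by
    rw [integral_const_mul, integral_sub (hwP.const_mul m) (integrable_const 1),
      integral_const_mul, Measure.integral_toReal_rnDeriv hQP]
    simp
  have hIC : ∫ x, 3 / 2 * l ^ 2 * ((m * w x) ^ 2 - 1) ∂P
      = 3 / 2 * l ^ 2 * ((1 + chiSqDiv Q P) * m ^ 2 - 1) := by
    rw [integral_const_mul, integral_sub hw2 (integrable_const 1)]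
    simp_rw [mul_pow]
    rw [integral_const_mul]
    simp [w, chiSqDiv, mul_comm]
  calc klDiv P Q
      ≤ ∫ x, log m - (A * (1 - f x / m) + 3 * l * (m * w x - 1)
          - 3 / 2 * l ^ 2 * ((m * w x) ^ 2 - 1)) ∂P :=
        integral_mono_ae (integrable_llr_of_integrable_rnDeriv_sq hPQ hPQ2)
          ((integrable_const _).sub hABC) (ae_llr_le_log_sub_certificate hPQ hm l)
    _ = log m - 3 * l * (m - 1) + 3 / 2 * l ^ 2 * ((1 + chiSqDiv Q P) * m ^ 2 - 1) := by
        rw [integral_sub (integrable_const _) hABC, integral_sub hAB hC,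
          integral_add hA hB, hIA, hIB, hIC]
        simp only [integral_const, probReal_univ, smul_eq_mul, one_mul]
        ring
    _ = _ := by simp [m]

/-- When `d = 0`, the correction term of `chiSqUP` is the junk value `_ / 0 = 0`, matching
`l = χ²(P‖Q) / 0 = 0`. -/
theorem klDiv_le_chiSqUP (hPQ : P ≪ Q) (hQP : Q ≪ P)
    (hPQ2 : Integrable (fun x => (P.rnDeriv Q x).toReal ^ 2) Q)
    (hQP2 : Integrable (fun x => (Q.rnDeriv P x).toReal ^ 2) P) :
    klDiv P Q ≤ chiSqUP P Q := by
  set d := (1 + chiSqDiv Q P) * (1 + chiSqDiv P Q) ^ 2 - 1 with hd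
  convert klDiv_le_log_sub_add hPQ hQP hPQ2 hQP2 (chiSqDiv P Q / d) using 1
  rw [chiSqUP, ← hd]
  rcases eq_or_ne d 0 with h0 | h0
  · simp [h0]
  · field_simp
    ring

end ChiSquare

section ChainRule

variable {α : Type*} [MeasurableSpace α] {μ ν κ : Measure α}

lemma llr_ae_eq_llr_add_llr [SigmaFinite μ] [SigmaFinite ν] [SigmaFinite κ]
    (hμν : μ ≪ ν) (hνκ : ν ≪ κ) : llr μ κ =ᵐ[μ] llr μ ν + llr ν κ := by
  filter_upwards [(hμν.trans hνκ).ae_le (Measure.rnDeriv_mul_rnDeriv hμν),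
    ae_toReal_rnDeriv_pos hμν, hμν.ae_le (ae_toReal_rnDeriv_pos hνκ)] with x hmul h1 h2
  rw [Pi.add_apply, llr, llr, llr, ← hmul, Pi.mul_apply, ENNReal.toReal_mul,
    log_mul h1.ne' h2.ne']

variable {β : Type*} [MeasurableSpace β] {P₁ Q₁ : Measure α} {P₂ Q₂ : Measure β}
  [SigmaFinite P₁] [SigmaFinite Q₁] [SigmaFinite P₂] [SigmaFinite Q₂]

lemma rnDeriv_prod_ae_eq (h₁ : P₁ ≪ Q₁) (h₂ : P₂ ≪ Q₂) :
    (P₁.prod P₂).rnDeriv (Q₁.prod Q₂) =ᵐ[Q₁.prod Q₂]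
      fun z => P₁.rnDeriv Q₁ z.1 * P₂.rnDeriv Q₂ z.2 := by
  conv_lhs => rw [← Measure.withDensity_rnDeriv_eq P₁ Q₁ h₁,
    ← Measure.withDensity_rnDeriv_eq P₂ Q₂ h₂,
    prod_withDensity (Measure.measurable_rnDeriv _ _) (Measure.measurable_rnDeriv _ _)]
  exact Measure.rnDeriv_withDensity _ (by fun_prop)

lemma llr_prod_ae_eq (h₁ : P₁ ≪ Q₁) (h₂ : P₂ ≪ Q₂) :
    llr (P₁.prod P₂) (Q₁.prod Q₂) =ᵐ[P₁.prod P₂] fun z => llr P₁ Q₁ z.1 + llr P₂ Q₂ z.2 := by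
  filter_upwards [(h₁.prod h₂).ae_le (rnDeriv_prod_ae_eq h₁ h₂),
    Measure.quasiMeasurePreserving_fst.ae (ae_toReal_rnDeriv_pos h₁),
    Measure.quasiMeasurePreserving_snd.ae (ae_toReal_rnDeriv_pos h₂)] with z hz h1 h2
  rw [llr, hz, ENNReal.toReal_mul, log_mul h1.ne' h2.ne', llr, llr]

end ChainRule

section MutualInfo

variable {𝓧 𝓨 : Type*} [MeasurableSpace 𝓧] [MeasurableSpace 𝓨] {μ : Measure (𝓧 × 𝓨)}
  [IsFiniteMeasure μ] {QX : Measure 𝓧} {QY : Measure 𝓨} [SigmaFinite QX] [SigmaFinite QY]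

lemma llr_prod_ae_eq_llr_add_llr_marginals (hμ : μ ≪ μ.fst.prod μ.snd)
    (hacX : μ.fst ≪ QX) (hacY : μ.snd ≪ QY) :
    llr μ (QX.prod QY) =ᵐ[μ]
      fun z => llr μ (μ.fst.prod μ.snd) z + (llr μ.fst QX z.1 + llr μ.snd QY z.2) := by
  filter_upwards [llr_ae_eq_llr_add_llr hμ (hacX.prod hacY),
    hμ.ae_le (llr_prod_ae_eq hacX hacY)] with z h1 h2
  rw [h1, Pi.add_apply, h2]

lemma integrable_llr_prod (hμ : μ ≪ μ.fst.prod μ.snd) (hacX : μ.fst ≪ QX) (hacY : μ.snd ≪ QY)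
    (hI : Integrable (llr μ (μ.fst.prod μ.snd)) μ) (hX : Integrable (llr μ.fst QX) μ.fst)
    (hY : Integrable (llr μ.snd QY) μ.snd) : Integrable (llr μ (QX.prod QY)) μ :=
  (hI.add ((hX.comp_measurable measurable_fst).add (hY.comp_measurable measurable_snd))).congr
    (llr_prod_ae_eq_llr_add_llr_marginals hμ hacX hacY).symm

lemma klDiv_prod_eq_mutualInfo_add_klDiv (hμ : μ ≪ μ.fst.prod μ.snd) (hacX : μ.fst ≪ QX)
    (hacY : μ.snd ≪ QY) (hI : Integrable (llr μ (μ.fst.prod μ.snd)) μ)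
    (hX : Integrable (llr μ.fst QX) μ.fst) (hY : Integrable (llr μ.snd QY) μ.snd) :
    klDiv μ (QX.prod QY) = mutualInfo μ + klDiv μ.fst QX + klDiv μ.snd QY := by
  have hX' : Integrable (fun z => llr μ.fst QX z.1) μ := hX.comp_measurable measurable_fst
  have hY' : Integrable (fun z => llr μ.snd QY z.2) μ := hY.comp_measurable measurable_snd
  have hXY : Integrable (fun z => llr μ.fst QX z.1 + llr μ.snd QY z.2) μ := hX'.add hY'
  have hfst : ∫ z, llr μ.fst QX z.1 ∂μ = klDiv μ.fst QX := (integral_map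
    measurable_fst.aemeasurable (stronglyMeasurable_llr _ _).aestronglyMeasurable).symm
  have hsnd : ∫ z, llr μ.snd QY z.2 ∂μ = klDiv μ.snd QY := (integral_map
    measurable_snd.aemeasurable (stronglyMeasurable_llr _ _).aestronglyMeasurable).symm
  rw [klDiv, integral_congr_ae (llr_prod_ae_eq_llr_add_llr_marginals hμ hacX hacY),
    integral_add hI hXY, integral_add hX' hY', hfst, hsnd, ← add_assoc]
  rfl

end MutualInfo

/-- Donsker–Varadhan: Gibbs' inequality for `μ` against the tilted measure `ν.tilted f`. -/
lemma integral_sub_log_integral_exp_le_klDiv {α : Type*} [MeasurableSpace α] {μ ν : Measure α}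
    [IsProbabilityMeasure μ] [IsProbabilityMeasure ν] {f : α → ℝ} (hμν : μ ≪ ν)
    (hfμ : Integrable f μ) (hfν : Integrable (fun x => exp (f x)) ν)
    (hllr : Integrable (llr μ ν) μ) :
    ∫ x, f x ∂μ - log (∫ x, exp (f x) ∂ν) ≤ klDiv μ ν := by
  have := isProbabilityMeasure_tilted hfν
  have hgibbs := InformationTheory.integral_llr_add_sub_measure_univ_nonneg
    (hμν.trans (absolutelyContinuous_tilted hfν)) (integrable_llr_tilted_right hμν hfμ hllr hfν)
  rw [integral_llr_tilted_right hμν hfμ hfν hllr] at hgibbs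
  simp only [probReal_univ, add_sub_cancel_right] at hgibbs
  rw [klDiv]
  linarith

theorem mutualInfo_ge_chiSq_bound_general {𝓧 𝓨 : Type*} [MeasurableSpace 𝓧] [MeasurableSpace 𝓨]
    (μ : Measure (𝓧 × 𝓨)) [IsProbabilityMeasure μ]
    (QX : Measure 𝓧) (QY : Measure 𝓨) [IsProbabilityMeasure QX] [IsProbabilityMeasure QY]
    (hac : μ ≪ QX.prod QY)
    (hacX : μ.fst ≪ QX) (hacX' : QX ≪ μ.fst)
    (hacY : μ.snd ≪ QY) (hacY' : QY ≪ μ.snd)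
    (hchiX : Integrable (fun x => ((μ.fst.rnDeriv QX x).toReal) ^ 2) QX)
    (hchiX' : Integrable (fun x => ((QX.rnDeriv μ.fst x).toReal) ^ 2) μ.fst)
    (hchiY : Integrable (fun y => ((μ.snd.rnDeriv QY y).toReal) ^ 2) QY)
    (hchiY' : Integrable (fun y => ((QY.rnDeriv μ.snd y).toReal) ^ 2) μ.snd)
    (hklMI : Integrable (llr μ (μ.fst.prod μ.snd)) μ)
    (T : 𝓧 × 𝓨 → ℝ) (hT : Measurable T) (C : ℝ) (hTbd : ∀ z, |T z| ≤ C)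
    (α : ℝ) (hα : 0 < α) :
    mutualInfo μ ≥ (∫ z, T z ∂μ) - (∫ z, Real.exp (T z) ∂(QX.prod QY)) / α - Real.log α + 1
      - chiSqUP μ.fst QX - chiSqUP μ.snd QY := by
  have hX := integrable_llr_of_integrable_rnDeriv_sq hacX hchiX
  have hY := integrable_llr_of_integrable_rnDeriv_sq hacY hchiY
  have hTμ : Integrable T μ :=
    .of_bound hT.aestronglyMeasurable C (ae_of_all _ fun z => (norm_eq_abs _).trans_le (hTbd z))
  have hexpT : Integrable (fun z => exp (T z)) (QX.prod QY) :=
    .of_bound (by fun_prop) (exp C) (ae_of_all _ fun z => by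
      rw [norm_eq_abs, abs_of_pos (exp_pos _)]
      exact exp_le_exp.2 ((le_abs_self _).trans (hTbd z)))
  have hμ : μ ≪ μ.fst.prod μ.snd := hac.trans (hacX'.prod hacY')
  have hDV := integral_sub_log_integral_exp_le_klDiv hac hTμ hexpT
    (integrable_llr_prod hμ hacX hacY hklMI hX hY)
  rw [klDiv_prod_eq_mutualInfo_add_klDiv hμ hacX hacY hklMI hX hY] at hDV
  have hE := integral_exp_pos hexpT
  have hlog := log_le_sub_one_of_pos (div_pos hE hα)
  rw [log_div hE.ne' hα.ne'] at hlog
  linarith [klDiv_le_chiSqUP hacX hacX' hchiX hchiX', klDiv_le_chiSqUP hacY hacY' hchiY hchiY']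

/-- **Chi-square lower bound on mutual information.** For a joint law `μ = P_{XY}` with
marginals `P_X`, `P_Y` and reference probability measures `Q_{X'}`, `Q_{Y'}` satisfying the
absolute-continuity and finiteness assumptions below, for every bounded measurable
`T : 𝓧 × 𝓨 → ℝ` and every `α > 0`,
`I(X;Y) ≥ E_{P_{XY}}[T] − E_{Q_{X'} ⊗ Q_{Y'}}[exp T]/α − log α + 1 − χ²_UP(P_X‖Q_{X'})
  − χ²_UP(P_Y‖Q_{Y'})`. -/
theorem mutualInfo_ge_chiSq_bound {𝓧 𝓨 : Type*} [MeasurableSpace 𝓧] [MeasurableSpace 𝓨]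
    (μ : Measure (𝓧 × 𝓨)) [IsProbabilityMeasure μ]
    (QX : Measure 𝓧) (QY : Measure 𝓨) [IsProbabilityMeasure QX] [IsProbabilityMeasure QY]
    (hac : μ ≪ QX.prod QY)
    (hacX : μ.fst ≪ QX) (hacX' : QX ≪ μ.fst)
    (hacY : μ.snd ≪ QY) (hacY' : QY ≪ μ.snd)
    (hchiX : Integrable (fun x => ((μ.fst.rnDeriv QX x).toReal) ^ 2) QX)
    (hchiX' : Integrable (fun x => ((QX.rnDeriv μ.fst x).toReal) ^ 2) μ.fst)
    (hchiY : Integrable (fun y => ((μ.snd.rnDeriv QY y).toReal) ^ 2) QY)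
    (hchiY' : Integrable (fun y => ((QY.rnDeriv μ.snd y).toReal) ^ 2) μ.snd)
    (hklJoint : Integrable (llr μ (QX.prod QY)) μ)
    (hklMI : Integrable (llr μ (μ.fst.prod μ.snd)) μ)
    (hklX : Integrable (llr μ.fst QX) μ.fst)
    (hklY : Integrable (llr μ.snd QY) μ.snd)
    (T : 𝓧 × 𝓨 → ℝ) (hT : Measurable T) (C : ℝ) (hTbd : ∀ z, |T z| ≤ C)
    (α : ℝ) (hα : 0 < α) :
    mutualInfo μ ≥ (∫ z, T z ∂μ) - (∫ z, Real.exp (T z) ∂(QX.prod QY)) / α - Real.log α + 1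
      - chiSqUP μ.fst QX - chiSqUP μ.snd QY :=
  mutualInfo_ge_chiSq_bound_general μ QX QY hac hacX hacX' hacY hacY' hchiX hchiX' hchiY hchiY'
    hklMI T hT C hTbd α hα
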